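/- Let (M, d) be a metric space, S a finite set of samples in M, and s₀, s₁, s₂, s₃ consecutive samples along a curve with non-uniformity ratio u < 2 at s₁ and s₂. If s₀ is the nearest neighbor of s₁ within S and s₃ is the nearest neighbor of s₂ within S, then d(s₀, s₁) + d(s₂, s₃) > d(s₁, s₂), i.e., the edge (s₁, s₂) belongs to the Spheres-of-Influence graph of S. -/
import Mathlib

/-- If `s₀, s₁, s₂, s₃` are consecutive samples with non-uniformity ratio `< 2`
at `s₁` and at `s₂`, and `s₀` (resp. `s₃`) is the nearest neighbor of `s₁`
(resp. `s₂`) within the sample set `S`, then `d(s₀,s₁) + d(s₂,s₃) > d(s₁,s₂)`,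
so the edge `(s₁, s₂)` belongs to the Spheres-of-Influence graph of `S`. -/
theorem stmt_5 {M : Type*} [MetricSpace M] (S : Finset M) (s₀ s₁ s₂ s₃ : M)
    (hs₀ : s₀ ∈ S) (hs₁ : s₁ ∈ S) (hs₂ : s₂ ∈ S) (hs₃ : s₃ ∈ S)
    (hu₁ : max (dist s₀ s₁) (dist s₁ s₂) < 2 * min (dist s₀ s₁) (dist s₁ s₂))
    (hu₂ : max (dist s₁ s₂) (dist s₂ s₃) < 2 * min (dist s₁ s₂) (dist s₂ s₃))
    (hnn₁ : ∀ s ∈ S, s ≠ s₁ → dist s₀ s₁ ≤ dist s₁ s)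
    (hnn₂ : ∀ s ∈ S, s ≠ s₂ → dist s₂ s₃ ≤ dist s₂ s) :
    dist s₀ s₁ + dist s₂ s₃ > dist s₁ s₂ := by
  have h1 : dist s₁ s₂ < 2 * dist s₀ s₁ :=
    lt_of_le_of_lt (le_max_right _ _)
      (lt_of_lt_of_le hu₁ (by nlinarith [min_le_left (dist s₀ s₁) (dist s₁ s₂)]))
  have h2 : dist s₁ s₂ < 2 * dist s₂ s₃ :=
    lt_of_le_of_lt (le_max_left _ _)
      (lt_of_lt_of_le hu₂ (by nlinarith [min_le_right (dist s₁ s₂) (dist s₂ s₃)]))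
  linarith
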